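/- arXiv:math/0104121 — 6 statements merged into one kernel-verified Lean document; each statement's English description precedes it below -/
import Mathlib

section
/- Let a, b, c, A be real numbers with b ≥ 0, c > 0, A > 0 and A − 2ab > 0. Then a²c² + A(A − 2ab) > 0, the denominator ac² + c·√(a²c² + A(A − 2ab)) is positive, the point s₀ := (A − 2ab)/( ac² + c·√(a²c² + A(A − 2ab)) ) is positive, and the function f attains there the value f(s₀) = A² / ( bA − ac² + c·√(a²c² + A(A − 2ab)) ). (This is the computation of the maximizer s₀ of f and of f(s₀) in Section 3 of the paper.) -/
/-- The maximizer `s₀` of `f(s) = 2(a + As)/(1 + 2bs + c²s²)` is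
positive and `f(s₀) = A²/(bA - ac² + c√(a²c² + A(A - 2ab)))`. -/
theorem maximizer_of_f
    (a b c A : ℝ) (hb : 0 ≤ b) (hc : 0 < c) (hA : 0 < A) (hD : 0 < A - 2 * a * b) :
    0 < a ^ 2 * c ^ 2 + A * (A - 2 * a * b) ∧
    0 < a * c ^ 2 + c * Real.sqrt (a ^ 2 * c ^ 2 + A * (A - 2 * a * b)) ∧
    0 < (A - 2 * a * b) /
        (a * c ^ 2 + c * Real.sqrt (a ^ 2 * c ^ 2 + A * (A - 2 * a * b))) ∧
    (2 * (a + A * ((A - 2 * a * b) /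
          (a * c ^ 2 + c * Real.sqrt (a ^ 2 * c ^ 2 + A * (A - 2 * a * b))))) /
        (1 + 2 * b * ((A - 2 * a * b) /
            (a * c ^ 2 + c * Real.sqrt (a ^ 2 * c ^ 2 + A * (A - 2 * a * b)))) +
          c ^ 2 * ((A - 2 * a * b) /
              (a * c ^ 2 + c * Real.sqrt (a ^ 2 * c ^ 2 + A * (A - 2 * a * b)))) ^ 2)
      = A ^ 2 /
          (b * A - a * c ^ 2 +
            c * Real.sqrt (a ^ 2 * c ^ 2 + A * (A - 2 * a * b)))) := by
  have hQ : 0 < a ^ 2 * c ^ 2 + A * (A - 2 * a * b) := by nlinarith [sq_nonneg (a*c)]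
  set r := Real.sqrt (a ^ 2 * c ^ 2 + A * (A - 2 * a * b)) with hrdef
  have hr0 : 0 ≤ r := Real.sqrt_nonneg _
  have hr2 : r ^ 2 = a ^ 2 * c ^ 2 + A * (A - 2 * a * b) := Real.sq_sqrt hQ.le
  have hrac : a * c < r := by nlinarith
  have hrac' : -(a * c) < r := by nlinarith
  have hd : 0 < a * c ^ 2 + c * r := by nlinarith
  have hs : 0 < (A - 2 * a * b) / (a * c ^ 2 + c * r) := div_pos hD hd
  refine ⟨hQ, hd, hs, ?_⟩
  have hden2 : 0 < b * A - a * c ^ 2 + c * r := by nlinarith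
  have hq : (0:ℝ) < 1 + 2 * b * ((A - 2 * a * b) / (a * c ^ 2 + c * r)) +
      c ^ 2 * ((A - 2 * a * b) / (a * c ^ 2 + c * r)) ^ 2 := by positivity
  set s := (A - 2 * a * b) / (a * c ^ 2 + c * r) with hsdef
  have hDpos : 0 < a * c + r := by linarith
  have hsD : s * (c * (a * c + r)) = A - 2 * a * b := by
    have he : a * c ^ 2 + c * r = c * (a * c + r) := by ring
    rw [hsdef, ← he, div_mul_cancel₀ _ hd.ne']
  have ht : A * c * s = r - a * c := by
    apply mul_right_cancel₀ hDpos.ne'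
    linear_combination A * hsD - hr2
  rw [div_eq_div_iff hq.ne' hden2.ne']
  apply mul_left_cancel₀ (pow_ne_zero 2 hc.ne')
  linear_combination c ^ 2 * hr2 + (2 * c * (b * A - a * c ^ 2 + c * r) - 2 * b * A * c - c ^ 2 * (2 * (r - a * c) + (A * c * s - r + a * c))) * ht
end

section
/- Let a, b, c, A be real numbers with b ≥ 0, c > 0, A > 0 and A − 2ab > 0. Then the denominator bA − ac² + c·√(a²c² + A(A − 2ab)) is positive, the quantity V := A² / ( bA − ac² + c·√(a²c² + A(A − 2ab)) ) is positive, and for every s ≥ 0 one has f(s) = 2(a + As)/(1 + 2bs + c²s²) ≤ V; that is, V is the maximum of f on [0, ∞). (This establishes that the lower bound of Theorem 3.1 of the paper is the optimal value of the family of estimates λ² ≥ f(s).) -/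
/-- `V := A²/(bA - ac² + c√(a²c² + A(A - 2ab)))` is positive and is
the maximum of `f(s) = 2(a + As)/(1 + 2bs + c²s²)` on `[0, ∞)`. -/
theorem value_is_max_of_f
    (a b c A : ℝ) (hb : 0 ≤ b) (hc : 0 < c) (hA : 0 < A) (hD : 0 < A - 2 * a * b) :
    0 < b * A - a * c ^ 2 + c * Real.sqrt (a ^ 2 * c ^ 2 + A * (A - 2 * a * b)) ∧
    0 < A ^ 2 /
        (b * A - a * c ^ 2 + c * Real.sqrt (a ^ 2 * c ^ 2 + A * (A - 2 * a * b))) ∧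
    ∀ s : ℝ, 0 ≤ s →
      2 * (a + A * s) / (1 + 2 * b * s + c ^ 2 * s ^ 2) ≤
        A ^ 2 /
          (b * A - a * c ^ 2 + c * Real.sqrt (a ^ 2 * c ^ 2 + A * (A - 2 * a * b))) := by
  have hEpos : 0 < a ^ 2 * c ^ 2 + A * (A - 2 * a * b) := by
    nlinarith [sq_nonneg (a * c), mul_pos hA hD]
  set r := Real.sqrt (a ^ 2 * c ^ 2 + A * (A - 2 * a * b)) with hrdef
  have hr : r ^ 2 = a ^ 2 * c ^ 2 + A * (A - 2 * a * b) := Real.sq_sqrt hEpos.le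
  have hrnn : 0 ≤ r := Real.sqrt_nonneg _
  have hra : a * c < r := by nlinarith [mul_pos hA hD]
  have hDen : 0 < b * A - a * c ^ 2 + c * r := by
    nlinarith [mul_nonneg hb hA.le, mul_pos hc (sub_pos.mpr hra)]
  refine ⟨hDen, div_pos (by positivity) hDen, fun s hs => ?_⟩
  have hden1 : 0 < 1 + 2 * b * s + c ^ 2 * s ^ 2 := by positivity
  rw [div_le_div_iff₀ hden1 hDen]
  nlinarith [sq_nonneg (A * c * s - r + a * c), hr]
end

section
/- Let n ≥ 2 be an integer and let R, κ₀, r be real numbers with κ₀ ≤ R/n and r > 0, and assume condition (19): r² > (R/n − κ₀)·max{ R/(n−1), −R }. Set a := nR/(8(n−1)), b := (n/(n−1))(R/n − κ₀), c := r·√(n/(n−1)), A := c²/4 + 2((n−1)/n)ab. If λ is a real number such that for every t > 0 one has λ²(λ² − 2a) + 2bt(λ² − R/4) + (t² − t/2)c² > 0, then λ² > A² / ( bA − ac² + c·√(a²c² + A(A − 2ab)) ) > 0. (This is the algebraic core of Theorem 3.1 of the paper: the mini-max condition for an eigenvalue λ of the Dirac operator on a compact spin manifold with harmonic curvature tensor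 implies the stated lower bound.) -/
set_option maxHeartbeats 1000000

/-- algebraic core of Theorem 3.1 of the paper. Under condition (19),
if `λ` satisfies the mini-max condition for every `t > 0`, then
`λ² > A²/(bA - ac² + c√(a²c² + A(A - 2ab))) > 0`. -/
theorem dirac_eigenvalue_lower_bound
    (n : ℕ) (hn : 2 ≤ n) (R kappa0 r : ℝ) (hk : kappa0 ≤ R / n) (hr : 0 < r)
    (h19 : r ^ 2 > (R / n - kappa0) * max (R / (n - 1)) (-R))
    (a : ℝ) (ha : a = n * R / (8 * (n - 1)))
    (b : ℝ) (hb : b = (n / (n - 1)) * (R / n - kappa0))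
    (c : ℝ) (hc : c = r * Real.sqrt (n / (n - 1)))
    (A : ℝ) (hA : A = c ^ 2 / 4 + 2 * ((n - 1) / n) * a * b)
    (lam : ℝ)
    (h : ∀ t : ℝ, 0 < t →
      lam ^ 2 * (lam ^ 2 - 2 * a) + 2 * b * t * (lam ^ 2 - R / 4) +
        (t ^ 2 - t / 2) * c ^ 2 > 0) :
    lam ^ 2 >
      A ^ 2 /
        (b * A - a * c ^ 2 + c * Real.sqrt (a ^ 2 * c ^ 2 + A * (A - 2 * a * b))) ∧
    A ^ 2 /
        (b * A - a * c ^ 2 + c * Real.sqrt (a ^ 2 * c ^ 2 + A * (A - 2 * a * b))) >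
      0 := by
  have hn2 : (2 : ℝ) ≤ (n : ℝ) := by exact_mod_cast hn
  have hn0 : (0 : ℝ) < (n : ℝ) - 1 := by linarith
  have hnpos : (0 : ℝ) < (n : ℝ) := by linarith
  obtain ⟨d, hd⟩ : ∃ x : ℝ, x = R / (n : ℝ) - kappa0 := ⟨_, rfl⟩
  obtain ⟨e, he⟩ : ∃ x : ℝ, x = (n : ℝ) / ((n : ℝ) - 1) := ⟨_, rfl⟩
  have hd0 : 0 ≤ d := by rw [hd]; linarith
  have he0 : 0 < e := by rw [he]; exact div_pos hnpos hn0
  have he2 : e ≤ 2 := by rw [he, div_le_iff₀ hn0]; linarith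
  have hb' : b = e * d := by rw [hb, ← hd, ← he]
  have hb0 : 0 ≤ b := by rw [hb']; exact mul_nonneg he0.le hd0
  have ha' : a = R * e / 8 := by rw [ha, he]; field_simp [hn0.ne', hnpos.ne']
  have hc2 : c ^ 2 = e * r ^ 2 := by
    rw [hc, ← he, mul_pow, Real.sq_sqrt he0.le]; ring
  have hcpos : 0 < c := by
    rw [hc, ← he]; exact mul_pos hr (Real.sqrt_pos.mpr he0)
  have hA4 : A = (c ^ 2 + R * b) / 4 := by
    rw [hA, ha]; field_simp [hn0.ne', hnpos.ne']; ring
  have hAe : A = e * (r ^ 2 + R * d) / 4 := by rw [hA4, hc2, hb']; ring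
  -- consequences of (19)
  have h19' : d * max (R / ((n : ℝ) - 1)) (-R) < r ^ 2 := by rw [hd]; linarith [h19]
  have h19a : R * d / ((n : ℝ) - 1) < r ^ 2 := by
    have h1 : d * (R / ((n : ℝ) - 1)) ≤ d * max (R / ((n : ℝ) - 1)) (-R) :=
      mul_le_mul_of_nonneg_left (le_max_left _ _) hd0
    have h3 : d * (R / ((n : ℝ) - 1)) = R * d / ((n : ℝ) - 1) := by ring
    linarith
  have h19b : -(R * d) < r ^ 2 := by
    have h1 : d * (-R) ≤ d * max (R / ((n : ℝ) - 1)) (-R) :=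
      mul_le_mul_of_nonneg_left (le_max_right _ _) hd0
    have h3 : d * (-R) = -(R * d) := by ring
    linarith
  have hA_pos : 0 < A := by
    rw [hAe]
    have : 0 < r ^ 2 + R * d := by linarith
    positivity
  have hA2ab : 0 < A - 2 * a * b := by
    have hid : A - 2 * a * b = e * (r ^ 2 - R * d / ((n : ℝ) - 1)) / 4 := by
      rw [hAe, ha', hb', he]; field_simp [hn0.ne', hnpos.ne']; ring
    rw [hid]
    have : 0 < r ^ 2 - R * d / ((n : ℝ) - 1) := by linarith
    positivity
  -- the square root
  obtain ⟨S, hSdef⟩ : ∃ x : ℝ, x = Real.sqrt (a ^ 2 * c ^ 2 + A * (A - 2 * a * b)) :=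
    ⟨_, rfl⟩
  rw [← hSdef]
  have hS2arg : 0 < a ^ 2 * c ^ 2 + A * (A - 2 * a * b) := by
    have h1 : (0:ℝ) ≤ a ^ 2 * c ^ 2 := by positivity
    linarith only [h1, mul_pos hA_pos hA2ab]
  have hS2 : S ^ 2 = a ^ 2 * c ^ 2 + A * (A - 2 * a * b) := by
    rw [hSdef]; exact Real.sq_sqrt hS2arg.le
  have hSpos : 0 < S := by rw [hSdef]; exact Real.sqrt_pos.mpr hS2arg
  -- c*S > a*c^2
  have hcS : a * c ^ 2 < c * S := by
    rcases le_or_gt a 0 with ha0 | ha0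
    · have h1 : a * c ^ 2 ≤ 0 := mul_nonpos_iff.mpr (Or.inr ⟨ha0, (sq_nonneg c)⟩)
      have h2 : 0 < c * S := mul_pos hcpos hSpos
      linarith only [h1, h2]
    · have hac : 0 < a * c := mul_pos ha0 hcpos
      have hSac : a * c < S := by
        by_contra hcon
        push_neg at hcon
        have h1 : S ^ 2 ≤ (a * c) ^ 2 := pow_le_pow_left₀ hSpos.le hcon 2
        have h2 : (a * c) ^ 2 = a ^ 2 * c ^ 2 := by ring
        linarith only [h1, h2, hS2, mul_pos hA_pos hA2ab]
      calc a * c ^ 2 = (a * c) * c := by ring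
        _ < S * c := mul_lt_mul_of_pos_right hSac hcpos
        _ = c * S := by ring
  -- positivity of the denominator D
  have hD : 0 < b * A - a * c ^ 2 + c * S := by
    rcases le_or_gt (a * c ^ 2 - b * A) 0 with h2 | h2
    · have : 0 < c * S := mul_pos hcpos hSpos
      linarith only [h2, this]
    · have hbA : 0 ≤ b * A := mul_nonneg hb0 hA_pos.le
      have hapos : 0 < a := by
        by_contra hcon
        push_neg at hcon
        have h3 : a * c ^ 2 ≤ 0 := mul_nonpos_iff.mpr (Or.inr ⟨hcon, sq_nonneg c⟩)
        linarith only [h2, h3, hbA]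
      have hRpos : 0 < R := by
        by_contra hcon
        push_neg at hcon
        have h3 : R * e ≤ 0 := mul_nonpos_iff.mpr (Or.inr ⟨hcon, he0.le⟩)
        rw [ha'] at hapos
        linarith only [h3, hapos]
      have hid : a * c ^ 2 - b * A
          = e ^ 2 * (R * r ^ 2 - 2 * d * r ^ 2 - 2 * R * d ^ 2) / 8 := by
        rw [ha', hc2, hb', hAe]; ring
      have hx : 0 < R * r ^ 2 - 2 * d * r ^ 2 - 2 * R * d ^ 2 := by
        by_contra hcon
        push_neg at hcon
        have h3 : e ^ 2 * (R * r ^ 2 - 2 * d * r ^ 2 - 2 * R * d ^ 2) ≤ 0 :=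
          mul_nonpos_iff.mpr (Or.inl ⟨sq_nonneg e, hcon⟩)
        rw [hid] at h2
        linarith only [h2, h3]
      have hr2d : 2 * d ^ 2 < r ^ 2 := by
        by_contra hcon
        push_neg at hcon
        have h4 : R * r ^ 2 ≤ R * (2 * d ^ 2) := mul_le_mul_of_nonneg_left hcon hRpos.le
        have h5 : 0 ≤ d * r ^ 2 := mul_nonneg hd0 (sq_nonneg r)
        linarith only [hx, h4, h5]
      have hcb : 0 < c ^ 2 - b ^ 2 := by
        have hid2 : c ^ 2 - b ^ 2 = e * (r ^ 2 - e * d ^ 2) := by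
          rw [hc2, hb']; ring
        rw [hid2]
        have h6 : e * d ^ 2 ≤ 2 * d ^ 2 := mul_le_mul_of_nonneg_right he2 (sq_nonneg d)
        have : 0 < r ^ 2 - e * d ^ 2 := by linarith only [h6, hr2d]
        positivity
      have hkey : (a * c ^ 2 - b * A) ^ 2 < (c * S) ^ 2 := by
        have hexp : (c * S) ^ 2 - (a * c ^ 2 - b * A) ^ 2 = (c ^ 2 - b ^ 2) * A ^ 2 := by
          have hq : (c * S) ^ 2 = c ^ 2 * (a ^ 2 * c ^ 2 + A * (A - 2 * a * b)) := by
            rw [mul_pow, hS2]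
          rw [hq]; ring
        linarith only [hexp, mul_pos hcb (pow_pos hA_pos 2)]
      have h7 : a * c ^ 2 - b * A < c * S := by
        by_contra hcon
        push_neg at hcon
        have h8 : (c * S) ^ 2 ≤ (a * c ^ 2 - b * A) ^ 2 :=
          pow_le_pow_left₀ (mul_pos hcpos hSpos).le hcon 2
        linarith only [h8, hkey]
      linarith only [h7]
  -- the dichotomy from the mini-max hypothesis
  have key : A ≤ b * lam ^ 2 ∨
      (A - b * lam ^ 2) ^ 2 < c ^ 2 * (lam ^ 2 * (lam ^ 2 - 2 * a)) := by
    rcases le_or_gt A (b * lam ^ 2) with h1 | h1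
    · exact Or.inl h1
    · right
      have hc2pos : (0 : ℝ) < c ^ 2 := pow_pos hcpos 2
      have ht : 0 < (A - b * lam ^ 2) / c ^ 2 := div_pos (by linarith only [h1]) hc2pos
      have H := h _ ht
      have hfeq : lam ^ 2 * (lam ^ 2 - 2 * a) +
          2 * b * ((A - b * lam ^ 2) / c ^ 2) * (lam ^ 2 - R / 4) +
          (((A - b * lam ^ 2) / c ^ 2) ^ 2 - ((A - b * lam ^ 2) / c ^ 2) / 2) * c ^ 2 =
          lam ^ 2 * (lam ^ 2 - 2 * a) - (A - b * lam ^ 2) ^ 2 / c ^ 2 := by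
        rw [hA4]; field_simp; ring
      rw [hfeq] at H
      have hlt : (A - b * lam ^ 2) ^ 2 / c ^ 2 < lam ^ 2 * (lam ^ 2 - 2 * a) := by
        linarith only [H]
      calc (A - b * lam ^ 2) ^ 2 = ((A - b * lam ^ 2) ^ 2 / c ^ 2) * c ^ 2 :=
            (div_mul_cancel₀ _ hc2pos.ne').symm
        _ < (lam ^ 2 * (lam ^ 2 - 2 * a)) * c ^ 2 := mul_lt_mul_of_pos_right hlt hc2pos
        _ = c ^ 2 * (lam ^ 2 * (lam ^ 2 - 2 * a)) := by ring
  -- the main inequality A^2 < lam^2 * D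
  have hmain : A ^ 2 < lam ^ 2 * (b * A - a * c ^ 2 + c * S) := by
    rcases key with h1 | h1
    · have hbpos : 0 < b := by
        rcases hb0.lt_or_eq with h' | h'
        · exact h'
        · exfalso
          rw [← h'] at h1
          simp at h1
          linarith only [h1, hA_pos]
      have hlam2 : 0 < lam ^ 2 := by
        by_contra hcon
        push_neg at hcon
        have h3 : b * lam ^ 2 ≤ 0 := mul_nonpos_iff.mpr (Or.inl ⟨hbpos.le, hcon⟩)
        linarith only [h1, h3, hA_pos]
      have e1 : A ^ 2 ≤ lam ^ 2 * b * A := by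
        have := mul_le_mul_of_nonneg_right h1 hA_pos.le
        linarith only [this]
      have e2 : 0 < lam ^ 2 * (c * S - a * c ^ 2) :=
        mul_pos hlam2 (by linarith only [hcS])
      have hring : lam ^ 2 * (b * A - a * c ^ 2 + c * S)
          = lam ^ 2 * b * A + lam ^ 2 * (c * S - a * c ^ 2) := by ring
      linarith only [e1, e2, hring]
    · have hc2pos : (0 : ℝ) < c ^ 2 := pow_pos hcpos 2
      have hmu : 0 < lam ^ 2 * (lam ^ 2 - 2 * a) := by
        by_contra hcon
        push_neg at hcon
        have h3 : c ^ 2 * (lam ^ 2 * (lam ^ 2 - 2 * a)) ≤ 0 :=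
          mul_nonpos_iff.mpr (Or.inl ⟨hc2pos.le, hcon⟩)
        linarith only [h1, h3, sq_nonneg (A - b * lam ^ 2)]
      have hlam2 : 0 < lam ^ 2 := by
        rcases (mul_pos_iff.mp hmu) with ⟨h', _⟩ | ⟨h', _⟩
        · exact h'
        · exact absurd h' (not_lt.mpr (sq_nonneg lam))
      have hY : lam ^ 2 * (c * S) > A ^ 2 - lam ^ 2 * (b * A - a * c ^ 2) := by
        have hsq : (A ^ 2 - lam ^ 2 * (b * A - a * c ^ 2)) ^ 2 <
            (lam ^ 2 * (c * S)) ^ 2 := by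
          have hexp : (lam ^ 2 * (c * S)) ^ 2 -
              (A ^ 2 - lam ^ 2 * (b * A - a * c ^ 2)) ^ 2 =
              A ^ 2 * (c ^ 2 * (lam ^ 2 * (lam ^ 2 - 2 * a)) - (A - b * lam ^ 2) ^ 2) := by
            have hq : (lam ^ 2 * (c * S)) ^ 2 =
                (lam ^ 2) ^ 2 * c ^ 2 * (a ^ 2 * c ^ 2 + A * (A - 2 * a * b)) := by
              rw [show (lam ^ 2 * (c * S)) ^ 2 = (lam ^ 2) ^ 2 * c ^ 2 * S ^ 2 by ring,
                hS2]
            rw [hq]; ring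
          linarith only [hexp, mul_pos (pow_pos hA_pos 2) (sub_pos.mpr h1)]
        have hx0 : 0 < lam ^ 2 * (c * S) := mul_pos hlam2 (mul_pos hcpos hSpos)
        rcases le_or_gt (A ^ 2 - lam ^ 2 * (b * A - a * c ^ 2)) 0 with hy | hy
        · linarith only [hx0, hy]
        · by_contra hcon
          push_neg at hcon
          have h8 : (lam ^ 2 * (c * S)) ^ 2 ≤ (A ^ 2 - lam ^ 2 * (b * A - a * c ^ 2)) ^ 2 :=
            pow_le_pow_left₀ hx0.le hcon 2
          linarith only [h8, hsq]
      have hring : lam ^ 2 * (b * A - a * c ^ 2 + c * S)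
          = lam ^ 2 * (b * A - a * c ^ 2) + lam ^ 2 * (c * S) := by ring
      linarith only [hY, hring]
  refine ⟨?_, ?_⟩
  · rw [gt_iff_lt, div_lt_iff₀ hD]
    linarith only [hmain]
  · exact div_pos (pow_pos hA_pos 2) hD
end

section
/- Let n ≥ 2 be an integer and let κ₀, r, μ be real numbers with κ₀ < 0, r > 0 and μ ≥ 0. If for every t > 0 one has ((n−1)/n)·μ² − 2t·κ₀·μ + (t² − t/2)·r² > 0, then μ > (1/4)·r² / ( r·√((n−1)/n) + |κ₀| ). (This is the elementary discussion proving Theorem 2.2 of the paper: for a compact, non-Ricci-flat Riemannian spin manifold with harmonic curvature tensor and vanishing scalar curvature, every eigenvalue λ of the Dirac operator satisfies λ² > (1/4)|Ric|₀² / ( |Ric|₀√((n−1)/n) + |κ₀| ), with μ = λ², r = |Ric|₀ and κ₀ the minimum of the eigenvalues of the Ricci tensor.) -/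
/-- elementary discussion proving Theorem 2.2 of the paper, scalar
curvature zero case. -/
theorem eigenvalue_bound_zero_scalar_curvature
    (n : ℕ) (hn : 2 ≤ n) (kappa0 r mu : ℝ)
    (hk : kappa0 < 0) (hr : 0 < r) (hmu : 0 ≤ mu)
    (h : ∀ t : ℝ, 0 < t →
      ((n : ℝ) - 1) / n * mu ^ 2 - 2 * t * kappa0 * mu + (t ^ 2 - t / 2) * r ^ 2 > 0) :
    mu > (1 / 4) * r ^ 2 / (r * Real.sqrt (((n : ℝ) - 1) / n) + |kappa0|) := by
  have hn2 : (2 : ℝ) ≤ (n : ℝ) := by exact_mod_cast hn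
  have hnpos : (0 : ℝ) < (n : ℝ) := by linarith
  have ha : (0 : ℝ) < ((n : ℝ) - 1) / n := by
    apply div_pos <;> linarith
  set c := Real.sqrt (((n : ℝ) - 1) / n) with hcdef
  have hcpos : 0 < c := Real.sqrt_pos.mpr ha
  have hc : c ^ 2 = ((n : ℝ) - 1) / n := Real.sq_sqrt ha.le
  have hD : 0 < r * c + -kappa0 := by
    have := mul_pos hr hcpos; linarith
  rw [gt_iff_lt, abs_of_neg hk, div_lt_iff₀ hD]
  -- goal : 1 / 4 * r ^ 2 < mu * (r * c + -kappa0)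
  set L := r ^ 2 / 4 + kappa0 * mu with hLdef
  by_cases hL : L ≤ 0
  · -- then kappa0 * mu ≤ -r^2/4, so mu > 0 and mu * (-kappa0) ≥ r^2/4
    have hL' : kappa0 * mu ≤ -(r ^ 2) / 4 := by simp only [hLdef] at hL; linarith
    have hmupos : 0 < mu := by nlinarith
    nlinarith [mul_pos (mul_pos hmupos hr) hcpos]
  · push_neg at hL
    have hr2 : (0 : ℝ) < r ^ 2 := by positivity
    set t0 := L / r ^ 2 with ht0def
    have ht0 : 0 < t0 := div_pos hL hr2
    have ht := h t0 ht0
    have hnne : (n : ℝ) ≠ 0 := ne_of_gt hnpos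
    have hrne : r ≠ 0 := ne_of_gt hr
    have e : (((n : ℝ) - 1) / n * mu ^ 2 - 2 * t0 * kappa0 * mu
        + (t0 ^ 2 - t0 / 2) * r ^ 2) * r ^ 2
        = ((n : ℝ) - 1) / n * mu ^ 2 * r ^ 2 - L ^ 2 := by
      rw [ht0def, hLdef]
      field_simp
      ring
    have key : ((n : ℝ) - 1) / n * mu ^ 2 * r ^ 2 > L ^ 2 := by
      have h2 := mul_pos ht hr2
      rw [e] at h2
      linarith
    have key' : (c * mu * r) ^ 2 > L ^ 2 := by
      have : (c * mu * r) ^ 2 = ((n : ℝ) - 1) / n * mu ^ 2 * r ^ 2 := by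
        rw [← hc]; ring
      rw [this]; exact key
    have hcmr : c * mu * r > L := by
      nlinarith [mul_nonneg (mul_nonneg hcpos.le hmu) hr.le]
    rw [hLdef] at hcmr
    nlinarith [hcmr]
end

section
/- Let n ≥ 2 be an integer and let κ₁, …, κₙ be real numbers with min{κ₁, …, κₙ} < 0 and ∑_{i=1}^{n} κᵢ > 0. Then ∑_{i=1}^{n} κᵢ² > (1/(n−1)) · (∑_{i=1}^{n} κᵢ) · (∑_{i=1}^{n} κᵢ − min{κ₁, …, κₙ}). (This is the claim preceding Corollary 3.3 of the paper: if the scalar curvature R = ∑κᵢ of the Ricci eigenvalues κᵢ is positive and at least one eigenvalue of the Ricci tensor is negative, then the condition |Ric|² > (R/(n−1))(R − κ₀) of Corollary 3.2 is automatically satisfied, where κ₀ = min κᵢ and |Ric|² = ∑κᵢ².) -/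
/-- claim preceding Corollary 3.3 of the paper. If the minimum of the
Ricci eigenvalues `κᵢ` is negative and their sum is positive, then
`∑ κᵢ² > (1/(n-1)) (∑ κᵢ)(∑ κᵢ - min κᵢ)`. -/
theorem ricci_eigenvalue_condition
    (n : ℕ) (hn : 2 ≤ n) (κ : Fin n → ℝ)
    (hneg : (⨅ j, κ j) < 0)
    (hsum : 0 < ∑ i, κ i) :
    ∑ i, κ i ^ 2 >
      (1 / ((n : ℝ) - 1)) * (∑ i, κ i) * ((∑ i, κ i) - ⨅ j, κ j) := by
  have hnpos : 0 < n := by omega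
  haveI : Nonempty (Fin n) := ⟨⟨0, hnpos⟩⟩
  obtain ⟨i₀, hi₀⟩ := Finite.exists_min κ
  have hm : (⨅ j, κ j) = κ i₀ :=
    le_antisymm (ciInf_le (Set.Finite.bddBelow (Set.finite_range κ)) i₀) (le_ciInf hi₀)
  set m := κ i₀ with hmdef
  rw [hm] at hneg ⊢
  set S := ∑ i, κ i with hS
  have hn1 : (0:ℝ) < (n:ℝ) - 1 := by
    have : (2:ℝ) ≤ (n:ℝ) := by exact_mod_cast hn
    linarith
  -- sum over the rest
  have herase : ∑ i ∈ Finset.univ.erase i₀, κ i = S - m := by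
    rw [hS, ← Finset.sum_erase_add _ _ (Finset.mem_univ i₀)]; ring
  have hcard : ((Finset.univ.erase i₀).card : ℝ) = (n:ℝ) - 1 := by
    rw [Finset.card_erase_of_mem (Finset.mem_univ i₀)]
    simp
    have : 1 ≤ n := by omega
    push_cast [Nat.cast_sub this]
    ring
  have hCS : (S - m) ^ 2 ≤ ((n:ℝ) - 1) * ∑ i ∈ Finset.univ.erase i₀, κ i ^ 2 := by
    have := sq_sum_le_card_mul_sum_sq (s := Finset.univ.erase i₀) (f := κ)
    rw [herase, hcard] at this
    exact this
  have hsplit : ∑ i, κ i ^ 2 = m ^ 2 + ∑ i ∈ Finset.univ.erase i₀, κ i ^ 2 := by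
    rw [← Finset.sum_erase_add _ _ (Finset.mem_univ i₀)]; ring
  have hm2 : 0 < m ^ 2 := by nlinarith [hneg]
  have key : ((n:ℝ) - 1) * ∑ i, κ i ^ 2 > S * (S - m) := by
    have h1 : S * (S - m) < (S - m) ^ 2 := by nlinarith
    nlinarith [hCS, hsplit, mul_pos hn1 hm2]
  rw [gt_iff_lt, div_mul_eq_mul_div, div_mul_eq_mul_div, div_lt_iff₀ hn1]
  nlinarith [key]
end

section
/- For every real r > 0 set a := (1/3)(1/r² − 1), b := (2/3)(1 + 1/r²), c := (2/√3)(1 + 1/r²), A := (2/3)(1/r²)(1 + 1/r²). Then c² − b² = (8/9)(1 + 1/r²)², bA − ac² = (4/9)(1 + 1/r²)², and A² / ( bA − ac² + c·√(a²c² + A(A − 2ab)) ) = (1/2)( √(1 + 2/r⁴) − 1 ) > 0. (This is the computation of Example 2 in Section 3 of the paper, the product M⁴(r) = S²(r) × N² of a round sphere of radius r and a hyperbolic surface: the estimate of Theorem 3.1 yields λ² > ½(√(1 + 2/r⁴) − 1) > 0, so the Dirac operator has trivial kernel even when the scalar curvature is negative.) -/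
/-- Example 2 of Section 3 of the paper, `M⁴(r) = S²(r) × N²`. -/
theorem example_sphere_times_hyperbolic
    (r : ℝ) (hr : 0 < r)
    (a b c A : ℝ)
    (ha : a = (1 / 3) * (1 / r ^ 2 - 1))
    (hb : b = (2 / 3) * (1 + 1 / r ^ 2))
    (hc : c = (2 / Real.sqrt 3) * (1 + 1 / r ^ 2))
    (hA : A = (2 / 3) * (1 / r ^ 2) * (1 + 1 / r ^ 2)) :
    c ^ 2 - b ^ 2 = (8 / 9) * (1 + 1 / r ^ 2) ^ 2 ∧
    b * A - a * c ^ 2 = (4 / 9) * (1 + 1 / r ^ 2) ^ 2 ∧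
    A ^ 2 /
        (b * A - a * c ^ 2 + c * Real.sqrt (a ^ 2 * c ^ 2 + A * (A - 2 * a * b)))
      = (1 / 2) * (Real.sqrt (1 + 2 / r ^ 4) - 1) ∧
    0 < (1 / 2) * (Real.sqrt (1 + 2 / r ^ 4) - 1) := by
  have ht : 0 < 1 / r ^ 2 := by positivity
  set t : ℝ := 1 / r ^ 2 with htdef
  have h3 : Real.sqrt 3 ^ 2 = 3 := Real.sq_sqrt (by norm_num)
  have h3pos : 0 < Real.sqrt 3 := Real.sqrt_pos.mpr (by norm_num)
  have h43 : (2 / Real.sqrt 3) ^ 2 = 4 / 3 := by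
    rw [div_pow, h3]; norm_num
  have hc2 : c ^ 2 = (4 / 3) * (1 + t) ^ 2 := by
    rw [hc, mul_pow, h43]
  have h1 : c ^ 2 - b ^ 2 = (8 / 9) * (1 + t) ^ 2 := by
    rw [hc2, hb]; ring
  have h2 : b * A - a * c ^ 2 = (4 / 9) * (1 + t) ^ 2 := by
    rw [hc2, hb, hA, ha]; ring
  have htp : (0:ℝ) < 1 + t := by linarith
  -- the inner expression under the sqrt
  have hinner : a ^ 2 * c ^ 2 + A * (A - 2 * a * b)
      = (4 * (1 + t) ^ 2 / 27) * (2 * t ^ 2 + 1) := by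
    rw [hc2, ha, hb, hA]; ring
  have hcsqrt : c * Real.sqrt (a ^ 2 * c ^ 2 + A * (A - 2 * a * b))
      = (4 / 9) * (1 + t) ^ 2 * Real.sqrt (2 * t ^ 2 + 1) := by
    have hcpos : 0 ≤ c := by
      rw [hc]; positivity
    have key : ∀ X : ℝ, c * Real.sqrt X = Real.sqrt (c ^ 2 * X) := by
      intro X
      rw [Real.sqrt_mul (sq_nonneg c), Real.sqrt_sq hcpos]
    rw [key, hinner, hc2]
    have : (4 / 3) * (1 + t) ^ 2 * ((4 * (1 + t) ^ 2 / 27) * (2 * t ^ 2 + 1))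
        = ((4 / 9) * (1 + t) ^ 2) ^ 2 * (2 * t ^ 2 + 1) := by ring
    rw [this, Real.sqrt_mul (by positivity), Real.sqrt_sq (by positivity)]
  have hst : (1:ℝ) + 2 / r ^ 4 = 2 * t ^ 2 + 1 := by
    rw [htdef]; field_simp; ring
  set s : ℝ := Real.sqrt (2 * t ^ 2 + 1) with hsdef
  have hs2 : s ^ 2 = 2 * t ^ 2 + 1 := Real.sq_sqrt (by positivity)
  have hs1 : 1 < s := by
    have : (1:ℝ) < 2 * t ^ 2 + 1 := by nlinarith
    calc (1:ℝ) = Real.sqrt 1 := by simp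
    _ < s := Real.sqrt_lt_sqrt (by norm_num) this
  have hmain : A ^ 2 /
        (b * A - a * c ^ 2 + c * Real.sqrt (a ^ 2 * c ^ 2 + A * (A - 2 * a * b)))
      = (1 / 2) * (s - 1) := by
    rw [h2, hcsqrt, hA]
    rw [div_eq_iff (by positivity)]
    linear_combination (-(2/9) * (1+t)^2) * hs2
  refine ⟨h1, h2, ?_, ?_⟩
  · rw [hmain, hst, ← hsdef]
  · rw [hst, ← hsdef]; linarith
end
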